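/- arXiv:1803.07393 — 4 statements merged into one kernel-verified Lean document; each statement's English description precedes it below -/
import Mathlib

section
/- The one-step-delay information structure is partially nested: if player j's decision at time k - d(j,i) - 1 affects the information set of player i at time k, then player j's information set at time k - d(j,i) - 1 is contained in player i's information set at time k. Concretely, with information sets I_k^i = ⋃_{n=1}^N {x_n(0 : k - d(n,i))}, partial nestedness reduces to the inequality d(n,j) + d(j,i) + 1 ≥ d(n,i) for all n, which holds by the triangle inequality for graph distance. -/
/-- The one-step-delay information structure is partially nested.  The information
set of player `i` at (integer) time `k` is
`I_k^i = { (n, t) : player n's state at time t is known } = { (n,t) | t ≤ k - d(n,i) }`.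
Partial nestedness: player `j`'s information set at time `k - d(j,i) - 1` is contained
in player `i`'s information set at time `k`; equivalently
`d(n,j) + d(j,i) + 1 ≥ d(n,i)` for all `n`, which holds by the triangle inequality. -/
theorem one_step_delay_partially_nested {V : Type*} (G : SimpleGraph V)
    (hG : G.Connected)
    (infoSet : ℤ → V → Set (V × ℤ))
    (hinfo : ∀ k i, infoSet k i = {p : V × ℤ | p.2 ≤ k - (G.dist p.1 i : ℤ)}) :
    ∀ (i j : V) (k : ℤ),
      (∀ n : V, (G.dist n j : ℤ) + (G.dist j i : ℤ) + 1 ≥ (G.dist n i : ℤ)) ∧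
      infoSet (k - (G.dist j i : ℤ) - 1) j ⊆ infoSet k i := by
  intro i j k
  have tri : ∀ n : V, (G.dist n i : ℤ) ≤ (G.dist n j : ℤ) + (G.dist j i : ℤ) := by
    intro n
    exact_mod_cast hG.dist_triangle (v := j)
  constructor
  · intro n; have := tri n; omega
  · intro p hp
    rw [hinfo] at hp ⊢
    have := tri p.1
    simp only [Set.mem_setOf_eq] at hp ⊢
    omega
end

section
/- Among all symmetric matrices S satisfying Q + [A B]^T S_+ [A B] − blkdiag(S, 0) ⪰ 0 (with S_+ fixed PSD), the Riccati choice S* = A^T S_+ A + Q_xx − (A^T S_+ B + Q_xu) Y^{-1} (B^T S_+ A + Q_ux) with Y = B^T S_+ B + Q_uu is maximal in the Loewner order: any feasible S satisfies S ⪯ S*, and hence tr(S) ≤ tr(S*). -/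
/-!
With `C = Aᵀ S₊ B + Q_xu`, the feasibility matrix is the block matrix
`[[Aᵀ S₊ A + Q_xx - S, C], [Cᵀ, Y]]`. Since `Y ≻ 0`, it is positive semidefinite exactly when
its Schur complement `Aᵀ S₊ A + Q_xx - C Y⁻¹ Cᵀ - S = S* - S` is.
-/

open Matrix

namespace Matrix

section Blocks

variable {ι κ ν R : Type*}

theorem fromCols_transpose_mul_mul_fromCols [Fintype ι] [Semiring R]
    (P : Matrix ι ι R) (A : Matrix ι κ R) (B : Matrix ι ν R) :
    (fromCols A B)ᵀ * P * fromCols A B =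
      fromBlocks (Aᵀ * P * A) (Aᵀ * P * B) (Bᵀ * P * A) (Bᵀ * P * B) := by
  rw [transpose_fromCols, fromRows_mul, fromRows_mul_fromCols]

theorem transpose_transpose_mul_mul [Fintype ι] [CommSemiring R]
    {P : Matrix ι ι R} (hP : P.IsSymm) (A : Matrix ι κ R) (B : Matrix ι ν R) :
    (Aᵀ * P * B)ᵀ = Bᵀ * P * A := by
  rw [transpose_mul, transpose_mul, transpose_transpose, hP.eq, Matrix.mul_assoc]

end Blocks

variable {κ ν : Type*} [Fintype κ] [Fintype ν]

theorem PosSemidef.transpose_mul_mul_add_posDef {P : Matrix κ κ ℝ} (hP : P.PosSemidef)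
    (B : Matrix κ ν ℝ) {D : Matrix ν ν ℝ} (hD : D.PosDef) : (Bᵀ * P * B + D).PosDef := by
  simpa only [conjTranspose_eq_transpose_of_trivial] using
    PosDef.posSemidef_add (hP.conjTranspose_mul_mul_same B) hD

theorem PosDef.schur_sub_posSemidef_of_fromBlocks_sub [DecidableEq ν] {X S : Matrix κ κ ℝ}
    {C : Matrix κ ν ℝ} {D : Matrix ν ν ℝ} (hD : D.PosDef)
    (h : (fromBlocks X C Cᵀ D - fromBlocks S 0 0 0).PosSemidef) :
    (X - C * D⁻¹ * Cᵀ - S).PosSemidef := by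
  have : Invertible D := hD.isUnit.invertible
  simp only [sub_eq_add_neg, fromBlocks_neg, fromBlocks_add, neg_zero, add_zero] at h
  rw [← sub_eq_add_neg, ← conjTranspose_eq_transpose_of_trivial, hD.fromBlocks₂₂] at h
  simpa only [conjTranspose_eq_transpose_of_trivial, sub_right_comm] using h

end Matrix

theorem riccati_choice_maximal_general {n m : ℕ}
    (A : Matrix (Fin n) (Fin n) ℝ) (B : Matrix (Fin n) (Fin m) ℝ)
    (Splus : Matrix (Fin n) (Fin n) ℝ) (hSp : Splus.PosSemidef)
    (Qxx : Matrix (Fin n) (Fin n) ℝ) (Qxu : Matrix (Fin n) (Fin m) ℝ)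
    (Qux : Matrix (Fin m) (Fin n) ℝ) (Quu : Matrix (Fin m) (Fin m) ℝ)
    (hQsym : Qux = Qxuᵀ)
    (hQuu : Quu.PosDef)
    (Y : Matrix (Fin m) (Fin m) ℝ) (hY : Y = Bᵀ * Splus * B + Quu)
    (Sstar : Matrix (Fin n) (Fin n) ℝ)
    (hSstar : Sstar = Aᵀ * Splus * A + Qxx -
      (Aᵀ * Splus * B + Qxu) * Y⁻¹ * (Bᵀ * Splus * A + Qux))
    (S : Matrix (Fin n) (Fin n) ℝ)
    (hfeas : (fromBlocks Qxx Qxu Qux Quu +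
      (fromCols A B)ᵀ * Splus * fromCols A B -
        fromBlocks S 0 0 0).PosSemidef) :
    (Sstar - S).PosSemidef ∧ S.trace ≤ Sstar.trace := by
  have hYpd : Y.PosDef := hY ▸ hSp.transpose_mul_mul_add_posDef B hQuu
  have hC : (Aᵀ * Splus * B + Qxu)ᵀ = Bᵀ * Splus * A + Qux := by
    rw [transpose_add, transpose_transpose_mul_mul (isHermitian_iff_isSymm.mp hSp.isHermitian),
      hQsym]
  have hblocks : fromBlocks Qxx Qxu Qux Quu + (fromCols A B)ᵀ * Splus * fromCols A B =
      fromBlocks (Aᵀ * Splus * A + Qxx) (Aᵀ * Splus * B + Qxu)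
        (Aᵀ * Splus * B + Qxu)ᵀ Y := by
    rw [fromCols_transpose_mul_mul_fromCols, fromBlocks_add, hC, hY]
    congr 1 <;> abel
  rw [hblocks] at hfeas
  have hmax : (Sstar - S).PosSemidef := by
    simpa only [hSstar, hC] using hYpd.schur_sub_posSemidef_of_fromBlocks_sub hfeas
  refine ⟨hmax, ?_⟩
  simpa only [trace_sub, sub_nonneg] using hmax.trace_nonneg

/-- Among all symmetric `S` such that `Q + [A B]ᵀ S₊ [A B] − blkdiag(S, 0) ⪰ 0`
(with `S₊` a fixed symmetric PSD matrix), the Riccati choice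
`S* = Aᵀ S₊ A + Q_xx − (Aᵀ S₊ B + Q_xu) Y⁻¹ (Bᵀ S₊ A + Q_ux)` with
`Y = Bᵀ S₊ B + Q_uu` is maximal in the Loewner order: `S ⪯ S*`, hence
`tr(S) ≤ tr(S*)`. -/
theorem riccati_choice_maximal {n m : ℕ}
    (A : Matrix (Fin n) (Fin n) ℝ) (B : Matrix (Fin n) (Fin m) ℝ)
    (Splus : Matrix (Fin n) (Fin n) ℝ) (hSp : Splus.PosSemidef)
    (Qxx : Matrix (Fin n) (Fin n) ℝ) (Qxu : Matrix (Fin n) (Fin m) ℝ)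
    (Qux : Matrix (Fin m) (Fin n) ℝ) (Quu : Matrix (Fin m) (Fin m) ℝ)
    (hQsym : Qux = Qxuᵀ)
    (hQ : (fromBlocks Qxx Qxu Qux Quu).PosSemidef)
    (hQuu : Quu.PosDef)
    (Y : Matrix (Fin m) (Fin m) ℝ) (hY : Y = Bᵀ * Splus * B + Quu)
    (Sstar : Matrix (Fin n) (Fin n) ℝ)
    (hSstar : Sstar = Aᵀ * Splus * A + Qxx -
      (Aᵀ * Splus * B + Qxu) * Y⁻¹ * (Bᵀ * Splus * A + Qux))
    (S : Matrix (Fin n) (Fin n) ℝ) (hSsym : S.IsSymm)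
    (hfeas : (fromBlocks Qxx Qxu Qux Quu +
      (fromCols A B)ᵀ * Splus * fromCols A B -
        fromBlocks S 0 0 0).PosSemidef) :
    (Sstar - S).PosSemidef ∧ S.trace ≤ Sstar.trace :=
  riccati_choice_maximal_general A B Splus hSp Qxx Qxu Qux Quu hQsym hQuu Y hY Sstar hSstar S hfeas
end

section
/- For symmetric PSD V partitioned as [[V_xx, V_xu],[V_ux, V_uu]] with V_xx ≻ 0, the minimum of tr([[X Y^{-1} X^T, X],[X^T, Y]] · V) over the blocks V_ux (= V_xu^T) and V_uu subject to V ⪰ 0 (with V_xx fixed) equals 0, attained at V_ux = −Y^{-1} X^T V_xx and V_uu = V_ux V_xx^{-1} V_xu. -/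
/-!
Both `Z` and the proposed `V⋆` are block matrices whose Schur complement vanishes (`Z` with
respect to `Y`, `V⋆` with respect to `V_xx`), so both are positive semidefinite; and
`tr(Z V) ≥ 0` for any two positive semidefinite matrices. Moreover the columns of
`V⋆ = [1; K] V_xx [1, Kᵀ]` with `K = -Y⁻¹ Xᵀ` lie in the kernel of `Z`, so `Z V⋆ = 0`.
-/

open Matrix
open scoped ComplexOrder MatrixOrder

namespace Matrix

theorem PosSemidef.trace_mul_nonneg {𝕜 ι : Type*} [RCLike 𝕜] [Fintype ι] {A B : Matrix ι ι 𝕜}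
    (hA : A.PosSemidef) (hB : B.PosSemidef) : 0 ≤ (A * B).trace := by
  classical
  obtain ⟨C, rfl⟩ := CStarAlgebra.nonneg_iff_eq_star_mul_self.mp hB.nonneg
  rw [star_eq_conjTranspose, ← Matrix.mul_assoc, trace_mul_comm, ← Matrix.mul_assoc]
  exact (hA.mul_mul_conjTranspose_same C).trace_nonneg

section SchurComplementZero

variable {m n K : Type*} [Field K] [PartialOrder K] [StarRing K] [StarOrderedRing K]

theorem PosDef.posSemidef_fromBlocks_mul_inv_mul_conjTranspose [Finite m] [Fintype n]
    [DecidableEq n] {D : Matrix n n K} (hD : D.PosDef) (B : Matrix m n K) :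
    (fromBlocks (B * D⁻¹ * Bᴴ) B Bᴴ D).PosSemidef := by
  have := hD.isUnit.invertible
  rw [PosDef.fromBlocks₂₂ _ _ hD, sub_self]
  exact PosSemidef.zero

theorem PosDef.posSemidef_fromBlocks_conjTranspose_mul_inv_mul [Fintype m] [Finite n]
    [DecidableEq m] {A : Matrix m m K} (hA : A.PosDef) (B : Matrix m n K) :
    (fromBlocks A B Bᴴ (Bᴴ * A⁻¹ * B)).PosSemidef := by
  have := hA.isUnit.invertible
  rw [PosDef.fromBlocks₁₁ _ _ hA, sub_self]
  exact PosSemidef.zero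

end SchurComplementZero

theorem fromBlocks_mul_fromRows_one_neg_inv_mul_eq_zero {m n R : Type*} [Fintype m] [Fintype n]
    [DecidableEq m] [DecidableEq n] [CommRing R] (X : Matrix m n R) (W : Matrix n m R)
    {Y : Matrix n n R} (hY : IsUnit Y.det) :
    fromBlocks (X * Y⁻¹ * W) X W Y * fromRows (1 : Matrix m m R) (-(Y⁻¹ * W)) = 0 := by
  rw [fromBlocks_mul_fromRows, Matrix.mul_one, Matrix.mul_one, Matrix.mul_neg, Matrix.mul_neg,
    ← Matrix.mul_assoc, ← Matrix.mul_assoc, mul_nonsing_inv _ hY, Matrix.one_mul, add_neg_cancel,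
    add_neg_cancel, fromRows_zero]

end Matrix

/-- For `Z = [[X Y⁻¹ Xᵀ, X], [Xᵀ, Y]]` with `Y ≻ 0` and fixed `V_xx ≻ 0`, the
minimum of `tr(Z V)` over the blocks `V_xu = V_uxᵀ` and `V_uu` subject to `V ⪰ 0`
equals `0`, attained at `V_ux = −Y⁻¹ Xᵀ V_xx` and `V_uu = V_ux V_xx⁻¹ V_xu`. -/
theorem trace_ZV_min_over_blocks {n m : ℕ}
    (X : Matrix (Fin n) (Fin m) ℝ) (Y : Matrix (Fin m) (Fin m) ℝ)
    (hY : Y.PosDef)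
    (Z : Matrix (Fin n ⊕ Fin m) (Fin n ⊕ Fin m) ℝ)
    (hZ : Z = fromBlocks (X * Y⁻¹ * Xᵀ) X Xᵀ Y)
    (Vxx : Matrix (Fin n) (Fin n) ℝ) (hVxx : Vxx.PosDef)
    (Vuxstar : Matrix (Fin m) (Fin n) ℝ)
    (hVuxstar : Vuxstar = -(Y⁻¹ * Xᵀ * Vxx))
    (Vuustar : Matrix (Fin m) (Fin m) ℝ)
    (hVuustar : Vuustar = Vuxstar * Vxx⁻¹ * Vuxstarᵀ) :
    (∀ (Vux : Matrix (Fin m) (Fin n) ℝ) (Vuu : Matrix (Fin m) (Fin m) ℝ),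
        (fromBlocks Vxx Vuxᵀ Vux Vuu).PosSemidef →
        0 ≤ (Z * fromBlocks Vxx Vuxᵀ Vux Vuu).trace) ∧
    (fromBlocks Vxx Vuxstarᵀ Vuxstar Vuustar).PosSemidef ∧
    (Z * fromBlocks Vxx Vuxstarᵀ Vuxstar Vuustar).trace = 0 := by
  set L := fromRows (1 : Matrix (Fin n) (Fin n) ℝ) (-(Y⁻¹ * Xᵀ))
  have hZL : Z * L = 0 := hZ ▸
    fromBlocks_mul_fromRows_one_neg_inv_mul_eq_zero X Xᵀ ((isUnit_iff_isUnit_det Y).mp hY.isUnit)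
  have hVstar : fromBlocks Vxx Vuxstarᵀ Vuxstar Vuustar = L * (Vxx * Lᵀ) := by
    have hVxxT : Vxxᵀ = Vxx := (isHermitian_iff_isSymm.mp hVxx.isHermitian).eq
    have hVux : Vuxstar = -(Y⁻¹ * Xᵀ) * Vxx := by rw [hVuxstar, Matrix.neg_mul]
    have hVuu : Vuustar = -(Y⁻¹ * Xᵀ) * (Vxx * (-(Y⁻¹ * Xᵀ))ᵀ) := by
      rw [hVuustar, hVux, transpose_mul, hVxxT, Matrix.mul_assoc, Matrix.mul_assoc,
        ← Matrix.mul_assoc Vxx⁻¹, nonsing_inv_mul _ ((isUnit_iff_isUnit_det Vxx).mp hVxx.isUnit),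
        Matrix.one_mul]
    rw [transpose_fromRows, mul_fromCols, fromRows_mul_fromCols, hVuu, hVux, transpose_mul,
      hVxxT, transpose_one, Matrix.mul_one, Matrix.one_mul, Matrix.one_mul]
  refine ⟨fun Vux Vuu hV => ?_, ?_, ?_⟩
  · have hZpsd : Z.PosSemidef := by
      simpa only [hZ, conjTranspose_eq_transpose_of_trivial] using
        hY.posSemidef_fromBlocks_mul_inv_mul_conjTranspose X
    exact hZpsd.trace_mul_nonneg hV
  · simpa only [hVuustar, conjTranspose_eq_transpose_of_trivial, transpose_transpose] using
      hVxx.posSemidef_fromBlocks_conjTranspose_mul_inv_mul Vuxstarᵀ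
  · rw [hVstar, ← Matrix.mul_assoc, hZL, Matrix.zero_mul, trace_zero]
end

section
/- Given PSD matrices Q and S_+ and the constraint matrix G = Q + [A B]^T S_+ [A B] − blkdiag(S,0) ⪰ 0, for any PSD covariance V satisfying the linear dynamics constraint, the Lagrangian term tr(G V) is nonnegative, and the dual function value tr(S(0))Σ_x + Σ_w Σ_k tr(S(k)) (minus the constraint penalty) lower-bounds the primal cost (weak duality for the covariance selection LQ problem). -/
/-!
Each Lagrangian term `tr(G(k) V(k))` is the trace of a product of two positive semidefinite
matrices, hence nonnegative. Substituting the dynamics, it equals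
`tr(Q V(k)) + Σᵢ τᵢ(k) tr(Wᵢ V(k)) + tr(S(k+1) X(k+1)) - tr(S(k+1) Σ_w) - tr(S(k) X(k))`
with `X(k) = F V(k) Fᵀ`, so summing over `k` telescopes the `tr(S(k) X(k))`. The power
constraints bound the `τ`-terms, and `Q_T ⪰ S(T)` bounds the remaining terminal term.
-/

open Matrix Finset

theorem add_sum_range_le_add_sum_range_of_step {β : Type*} [AddCommMonoid β] [PartialOrder β]
    [IsOrderedAddMonoid β] {a b c : ℕ → β} {T : ℕ} (h : ∀ k < T, a k + c k ≤ b k + a (k + 1)) :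
    a 0 + ∑ k ∈ range T, c k ≤ a T + ∑ k ∈ range T, b k := by
  induction T with
  | zero => simp
  | succ T ih =>
    calc a 0 + ∑ k ∈ range (T + 1), c k
        = (a 0 + ∑ k ∈ range T, c k) + c T := by rw [sum_range_succ, add_assoc]
      _ ≤ (a T + ∑ k ∈ range T, b k) + c T :=
        add_le_add (ih fun k hk => h k (by omega)) le_rfl
      _ = (a T + c T) + ∑ k ∈ range T, b k := by abel
      _ ≤ (b T + a (T + 1)) + ∑ k ∈ range T, b k :=
        add_le_add (h T (by omega)) le_rfl
      _ = a (T + 1) + ∑ k ∈ range (T + 1), b k := by rw [sum_range_succ]; abel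

namespace Matrix

open scoped ComplexOrder in
theorem PosSemidef.trace_mul_nonneg_s15 {ι 𝕜 : Type*} [Fintype ι] [DecidableEq ι] [RCLike 𝕜]
    {P N : Matrix ι ι 𝕜} (hP : P.PosSemidef) (hN : N.PosSemidef) : 0 ≤ (P * N).trace := by
  open MatrixOrder in
  obtain ⟨C, rfl⟩ := CStarAlgebra.nonneg_iff_eq_star_mul_self.mp hP.nonneg
  rw [Matrix.mul_assoc, trace_mul_comm, star_eq_conjTranspose]
  exact (hN.mul_mul_conjTranspose_same C).trace_nonneg

section

variable {R ι κ : Type*} [CommSemiring R] [Fintype ι] [Fintype κ]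

theorem trace_transpose_mul_mul_mul (C : Matrix κ ι R) (S : Matrix κ κ R) (V : Matrix ι ι R) :
    (Cᵀ * S * C * V).trace = (S * (C * V * Cᵀ)).trace := by
  rw [Matrix.mul_assoc, Matrix.mul_assoc, trace_mul_comm]
  simp only [Matrix.mul_assoc]

theorem transpose_fromCols_one_zero_mul_mul [DecidableEq κ] {μ : Type*} (S : Matrix κ κ R) :
    (fromCols 1 0 : Matrix κ (κ ⊕ μ) R)ᵀ * S * (fromCols 1 0 : Matrix κ (κ ⊕ μ) R) =
      fromBlocks S 0 0 0 := by
  rw [transpose_fromCols, transpose_one, transpose_zero, fromRows_mul, Matrix.one_mul,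
    Matrix.zero_mul, fromRows_mul_fromCols, Matrix.mul_one, Matrix.mul_zero, Matrix.zero_mul,
    Matrix.mul_zero]

end

theorem trace_lagrangian_mul {R σ α c : Type*} [CommRing R] [Fintype σ] [Fintype α] [Fintype c]
    [DecidableEq σ] (Q : Matrix (σ ⊕ α) (σ ⊕ α) R) (τ : c → R)
    (W : c → Matrix (σ ⊕ α) (σ ⊕ α) R) (A : Matrix σ σ R) (B : Matrix σ α R)
    (S S' : Matrix σ σ R) (V : Matrix (σ ⊕ α) (σ ⊕ α) R) :
    ((Q + ∑ i, τ i • W i + (fromCols A B)ᵀ * S' * fromCols A B - fromBlocks S 0 0 0) * V).trace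
      = (Q * V).trace + ∑ i, τ i * (W i * V).trace
        + (S' * (fromCols A B * V * (fromCols A B)ᵀ)).trace
        - (S * ((fromCols 1 0 : Matrix σ (σ ⊕ α) R) * V *
            (fromCols 1 0 : Matrix σ (σ ⊕ α) R)ᵀ)).trace := by
  rw [← transpose_fromCols_one_zero_mul_mul, Matrix.sub_mul, Matrix.add_mul, Matrix.add_mul,
    trace_sub, trace_add, trace_add, trace_transpose_mul_mul_mul, trace_transpose_mul_mul_mul,
    Finset.sum_mul, trace_sum]
  simp only [Matrix.smul_mul, trace_smul, smul_eq_mul]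

end Matrix

theorem weak_duality_covariance_selection_general {n m T M : ℕ}
    (A : Matrix (Fin n) (Fin n) ℝ) (B : Matrix (Fin n) (Fin m) ℝ)
    (Q : Matrix (Fin n ⊕ Fin m) (Fin n ⊕ Fin m) ℝ)
    (QT Sx Sw : Matrix (Fin n) (Fin n) ℝ)
    (W : Fin M → Matrix (Fin n ⊕ Fin m) (Fin n ⊕ Fin m) ℝ)
    (p : Fin M → ℕ → ℝ)
    (F : Matrix (Fin n) (Fin n ⊕ Fin m) ℝ)
    (hF : F = fromCols 1 0)
    -- primal feasibility
    (V : ℕ → Matrix (Fin n ⊕ Fin m) (Fin n ⊕ Fin m) ℝ)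
    (hVpsd : ∀ k, k ≤ T → (V k).PosSemidef)
    (hV0 : F * V 0 * Fᵀ = Sx)
    (hdyn : ∀ k, k < T →
      F * V (k + 1) * Fᵀ = fromCols A B * V k * (fromCols A B)ᵀ + Sw)
    (hpow : ∀ (i : Fin M) (k : ℕ), k < T → (W i * V k).trace ≤ p i k)
    -- dual variables and dual feasibility
    (S : ℕ → Matrix (Fin n) (Fin n) ℝ)
    (τ : Fin M → ℕ → ℝ) (hτ : ∀ i k, 0 ≤ τ i k)
    (hdualfeas : ∀ k, k < T →
      (Q + ∑ i : Fin M, τ i k • W i +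
        (fromCols A B)ᵀ * S (k + 1) * fromCols A B -
          fromBlocks (S k) 0 0 0).PosSemidef)
    (hterm : (QT - S T).PosSemidef) :
    (∀ k, k < T →
      0 ≤ ((Q + ∑ i : Fin M, τ i k • W i +
              (fromCols A B)ᵀ * S (k + 1) * fromCols A B -
                fromBlocks (S k) 0 0 0) * V k).trace) ∧
    (S 0 * Sx).trace + ∑ k ∈ Finset.range T, (S (k + 1) * Sw).trace -
        ∑ k ∈ Finset.range T, ∑ i : Fin M, τ i k * p i k ≤
      (QT * (F * V T * Fᵀ)).trace + ∑ k ∈ Finset.range T, (Q * V k).trace := by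
  have hlag k (hk : k < T) := (hdualfeas k hk).trace_mul_nonneg_s15 (hVpsd k hk.le)
  refine ⟨hlag, ?_⟩
  have hstep : ∀ k < T, (S k * (F * V k * Fᵀ)).trace
      + ((S (k + 1) * Sw).trace - ∑ i, τ i k * p i k)
      ≤ (Q * V k).trace + (S (k + 1) * (F * V (k + 1) * Fᵀ)).trace := by
    intro k hk
    have hlagk := hlag k hk
    rw [trace_lagrangian_mul, ← hF, eq_sub_of_add_eq (hdyn k hk).symm, Matrix.mul_sub, trace_sub]
      at hlagk
    have hpen : ∑ i, τ i k * (W i * V k).trace ≤ ∑ i, τ i k * p i k :=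
      sum_le_sum fun i _ => mul_le_mul_of_nonneg_left (hpow i k hk) (hτ i k)
    linarith
  have hterminal : (S T * (F * V T * Fᵀ)).trace ≤ (QT * (F * V T * Fᵀ)).trace := by
    have hXT : (F * V T * Fᵀ).PosSemidef := by
      simpa using (hVpsd T le_rfl).mul_mul_conjTranspose_same F
    have hgap := hterm.trace_mul_nonneg_s15 hXT
    rw [Matrix.sub_mul, trace_sub] at hgap
    linarith
  have htelescope := add_sum_range_le_add_sum_range_of_step hstep
  rw [hV0, sum_sub_distrib] at htelescope
  linarith

/-- Weak duality for the power-constrained covariance selection LQ problem: for any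
primal-feasible PSD covariance sequence `V(0:T)` and any dual variables `S(k)`
(symmetric) and `τ_i(k) ≥ 0` satisfying the dual feasibility conditions
`G(k) = Q + Σ_i τ_i(k) W_i + [A B]ᵀ S(k+1) [A B] − blkdiag(S(k),0) ⪰ 0` and
`Q_T − S(T) ⪰ 0`, each Lagrangian term `tr(G(k) V(k))` is nonnegative, and the dual
function value lower-bounds the primal cost. -/
theorem weak_duality_covariance_selection {n m T M : ℕ}
    (A : Matrix (Fin n) (Fin n) ℝ) (B : Matrix (Fin n) (Fin m) ℝ)
    (Q : Matrix (Fin n ⊕ Fin m) (Fin n ⊕ Fin m) ℝ)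
    (QT Sx Sw : Matrix (Fin n) (Fin n) ℝ)
    (W : Fin M → Matrix (Fin n ⊕ Fin m) (Fin n ⊕ Fin m) ℝ)
    (p : Fin M → ℕ → ℝ)
    (F : Matrix (Fin n) (Fin n ⊕ Fin m) ℝ)
    (hF : F = fromCols 1 0)
    -- primal feasibility
    (V : ℕ → Matrix (Fin n ⊕ Fin m) (Fin n ⊕ Fin m) ℝ)
    (hVpsd : ∀ k, k ≤ T → (V k).PosSemidef)
    (hV0 : F * V 0 * Fᵀ = Sx)
    (hdyn : ∀ k, k < T →
      F * V (k + 1) * Fᵀ = fromCols A B * V k * (fromCols A B)ᵀ + Sw)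
    (hpow : ∀ (i : Fin M) (k : ℕ), k < T → (W i * V k).trace ≤ p i k)
    -- dual variables and dual feasibility
    (S : ℕ → Matrix (Fin n) (Fin n) ℝ) (hSsym : ∀ k, (S k).IsSymm)
    (τ : Fin M → ℕ → ℝ) (hτ : ∀ i k, 0 ≤ τ i k)
    (hdualfeas : ∀ k, k < T →
      (Q + ∑ i : Fin M, τ i k • W i +
        (fromCols A B)ᵀ * S (k + 1) * fromCols A B -
          fromBlocks (S k) 0 0 0).PosSemidef)
    (hterm : (QT - S T).PosSemidef) :
    (∀ k, k < T →
      0 ≤ ((Q + ∑ i : Fin M, τ i k • W i +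
              (fromCols A B)ᵀ * S (k + 1) * fromCols A B -
                fromBlocks (S k) 0 0 0) * V k).trace) ∧
    (S 0 * Sx).trace + ∑ k ∈ Finset.range T, (S (k + 1) * Sw).trace -
        ∑ k ∈ Finset.range T, ∑ i : Fin M, τ i k * p i k ≤
      (QT * (F * V T * Fᵀ)).trace + ∑ k ∈ Finset.range T, (Q * V k).trace :=
  weak_duality_covariance_selection_general A B Q QT Sx Sw W p F hF V hVpsd hV0 hdyn hpow S τ hτ
    hdualfeas hterm
end
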